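/- Let (G,X) be a strongly marked group with Property D. For g ∈ G, define Supp(g) ⊆ X to be the set of generators appearing in some (equivalently, any) reduced syllabic expression of g. Then for any subset Y ⊆ X and g ∈ G, one has g ∈ G_Y if and only if Supp(g) ⊆ Y, where G_Y is the subgroup of G generated by Y. -/

import Mathlib

/-!
Write `g` as a product of generators from `Y` and their inverses, i.e. as a syllabic word with
all syllables based in `Y`. Elementary M-operations keep the syllables based in `Y`: a type I
merge `x ^ a * y ^ b` forces `x = y` by strong marking, and type II operations only permute
the two letters of an alternating block. Shortening by M-operations as far as possible gives,
by Property D, a reduced word for `g` based in `Y`, and any other reduced word `w` for `g` is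
linked to it by type II operations, which preserve the set of letters.
-/

namespace Paper

/-- The alternating list `(a, b, a, b, ...)` of length `m`. -/
def altList {α : Type*} (a b : α) : ℕ → List α
  | 0 => []
  | n + 1 => a :: altList b a n

/-- The alternating product `a b a ⋯` of length `m` in a monoid. -/
def altProd {G : Type*} [Monoid G] (a b : G) (m : ℕ) : G := (altList a b m).prod

variable {G : Type*} [Group G]

/-- The set of syllables of a generating set `X`: nontrivial powers of elements of `X`. -/
def Syll (X : Set G) : Set G := {s | ∃ x ∈ X, ∃ a : ℤ, s = x ^ a ∧ s ≠ 1}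

/-- A syllabic word: a list all of whose entries are syllables. -/
def SylWord (X : Set G) (w : List G) : Prop := ∀ s ∈ w, s ∈ Syll X

/-- The syllabic length of an element: minimal length of a syllabic word representing it. -/
noncomputable def sylLen (X : Set G) (g : G) : ℕ :=
  sInf {n | ∃ w : List G, SylWord X w ∧ w.prod = g ∧ w.length = n}

/-- A syllabic word is reduced if its length is the syllabic length of the element
it represents. -/
def Reduced (X : Set G) (w : List G) : Prop :=
  SylWord X w ∧ w.length = sylLen X w.prod

/-- Elementary M-operation of type I. -/
def MOpI (X : Set G) (w w' : List G) : Prop :=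
  ∃ (w₁ w₂ : List G) (s t : G), s ∈ Syll X ∧ t ∈ Syll X ∧
    w = w₁ ++ [s, t] ++ w₂ ∧
    ((s * t ∈ Syll X ∧ w' = w₁ ++ [s * t] ++ w₂) ∨ (s * t = 1 ∧ w' = w₁ ++ w₂))

/-- Elementary M-operation of type II. -/
def MOpII (X : Set G) (w w' : List G) : Prop :=
  ∃ (w₁ w₂ : List G) (s t : G) (m : ℕ), s ∈ Syll X ∧ t ∈ Syll X ∧ 2 ≤ m ∧
    altProd s t m = altProd t s m ∧ sylLen X (altProd s t m) = m ∧
    w = w₁ ++ altList s t m ++ w₂ ∧ w' = w₁ ++ altList t s m ++ w₂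

/-- Elementary M-operation (of type I or type II). -/
def MOp (X : Set G) (w w' : List G) : Prop := MOpI X w w' ∨ MOpII X w w'

/-- A syllabic word is M-reduced if its length cannot be shortened by any finite
sequence of elementary M-operations. -/
def MReduced (X : Set G) (w : List G) : Prop :=
  ∀ w', Relation.ReflTransGen (MOp X) w w' → ¬ w'.length < w.length

/-- Property D: a syllabic word is reduced iff it is M-reduced, and any two reduced
syllabic words representing the same element are connected by a finite sequence of
elementary M-operations of type II. -/
def PropertyD (X : Set G) : Prop :=
  (∀ w : List G, SylWord X w → (Reduced X w ↔ MReduced X w)) ∧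
  (∀ w w' : List G, Reduced X w → Reduced X w' → w.prod = w'.prod →
    Relation.ReflTransGen (MOpII X) w w')

/-- `(G, X)` is a marked group: `X` generates `G`. -/
def Marked (X : Set G) : Prop := Subgroup.closure X = ⊤

/-- `(G, X)` is a strongly marked group. -/
def StronglyMarked (X : Set G) : Prop :=
  Marked X ∧ (1 : G) ∉ X ∧
    ∀ x ∈ X, ∀ y ∈ X, ∀ a b : ℤ, x ^ a ≠ 1 → y ^ b ≠ 1 →
      (x ^ a * y ^ b ∈ Syll X ∨ x ^ a * y ^ b = 1) → x = y

/-- The data of a Dyer graph: a simplicial graph with edge labels `m ≥ 2` and vertex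
labels `f ∈ ℕ_{≥2} ∪ {∞}` such that any edge with `m(e) ≠ 2` has both endpoints
labelled `2`. -/
structure DyerData (V : Type*) where
  adj : V → V → Prop
  symm : ∀ u v, adj u v → adj v u
  loopless : ∀ v, ¬ adj v v
  m : V → V → ℕ
  m_symm : ∀ u v, m u v = m v u
  m_two_le : ∀ u v, adj u v → 2 ≤ m u v
  f : V → ℕ∞
  f_two_le : ∀ v, 2 ≤ f v
  dyer : ∀ u v, adj u v → m u v ≠ 2 → f u = 2 ∧ f v = 2

/-- The defining relators of the Dyer group of `Δ`. -/
def DyerData.rels {V : Type*} (Δ : DyerData V) : Set (FreeGroup V) :=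
  {r | ∃ v, Δ.f v ≠ ⊤ ∧ r = (FreeGroup.of v) ^ (Δ.f v).toNat} ∪
  {r | ∃ u v, Δ.adj u v ∧
    r = altProd (FreeGroup.of u) (FreeGroup.of v) (Δ.m u v) *
        (altProd (FreeGroup.of v) (FreeGroup.of u) (Δ.m u v))⁻¹}

/-- The Dyer group of the data `Δ`. -/
abbrev DyerGroup {V : Type*} (Δ : DyerData V) := PresentedGroup Δ.rels

/-- The standard generating set of a Dyer group. -/
def DyerGens {V : Type*} (Δ : DyerData V) : Set (DyerGroup Δ) :=
  Set.range (PresentedGroup.of (rels := Δ.rels))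

open Relation

variable {X Y : Set G}

lemma mem_altList {α : Type*} {a b x : α} {m : ℕ} (hm : 2 ≤ m) :
    x ∈ altList a b m ↔ x = a ∨ x = b := by
  obtain ⟨k, rfl⟩ : ∃ k, m = k + 2 := ⟨m - 2, by omega⟩
  have subset : ∀ {a b : α} (n : ℕ), x ∈ altList a b n → x = a ∨ x = b := by
    intro a b n
    induction n generalizing a b with
    | zero => simp [altList]
    | succ n ih =>
      simp only [altList, List.mem_cons]
      rintro (h | h)
      · exact Or.inl h
      · exact (ih h).symm
  refine ⟨subset _, ?_⟩
  rintro (rfl | rfl) <;> simp [altList]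

lemma syll_mono (hXY : Y ⊆ X) : Syll Y ⊆ Syll X :=
  fun _ ⟨x, hx, a, hs, hne⟩ => ⟨x, hXY hx, a, hs, hne⟩

lemma sylWord_mono (hXY : Y ⊆ X) {w : List G} (hw : SylWord Y w) : SylWord X w :=
  fun s hs => syll_mono hXY (hw s hs)

lemma inv_mem_syll {s : G} (hs : s ∈ Syll Y) : s⁻¹ ∈ Syll Y := by
  obtain ⟨x, hx, a, rfl, hne⟩ := hs
  exact ⟨x, hx, -a, (zpow_neg x a).symm, inv_ne_one.2 hne⟩

lemma sylWord_append {w₁ w₂ : List G} :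
    SylWord Y (w₁ ++ w₂) ↔ SylWord Y w₁ ∧ SylWord Y w₂ :=
  List.forall_mem_append

lemma sylWord_cons {s : G} {w : List G} : SylWord Y (s :: w) ↔ s ∈ Syll Y ∧ SylWord Y w :=
  List.forall_mem_cons

lemma exists_sylWord_of_mem_closure {g : G} (hg : g ∈ Subgroup.closure Y) :
    ∃ w, SylWord Y w ∧ w.prod = g := by
  induction hg using Subgroup.closure_induction with
  | mem x hx =>
    by_cases hx₁ : x = 1
    · exact ⟨[], by simp [SylWord], by simp [hx₁]⟩
    · exact ⟨[x], by simpa [SylWord] using ⟨x, hx, 1, (zpow_one x).symm, hx₁⟩, by simp⟩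
  | one => exact ⟨[], by simp [SylWord], rfl⟩
  | mul x y _ _ hx hy =>
    obtain ⟨u, hu, rfl⟩ := hx
    obtain ⟨v, hv, rfl⟩ := hy
    exact ⟨u ++ v, sylWord_append.2 ⟨hu, hv⟩, List.prod_append⟩
  | inv x _ hx =>
    obtain ⟨u, hu, rfl⟩ := hx
    refine ⟨(u.map (·⁻¹)).reverse, ?_, (List.prod_inv_reverse u).symm⟩
    intro s hs
    obtain ⟨t, ht, rfl⟩ := List.mem_map.1 (List.mem_reverse.1 hs)
    exact inv_mem_syll (hu t ht)

lemma MOpII.mem_iff {w w' : List G} (h : MOpII X w w') {u : G} : u ∈ w ↔ u ∈ w' := by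
  obtain ⟨w₁, w₂, s, t, m, -, -, hm, -, -, rfl, rfl⟩ := h
  simp only [List.mem_append, mem_altList hm, or_comm (a := u = s)]

lemma MOp.prod_eq {w w' : List G} (h : MOp X w w') : w'.prod = w.prod := by
  rcases h with ⟨w₁, w₂, s, t, -, -, rfl, ⟨-, rfl⟩ | ⟨hst, rfl⟩⟩ |
      ⟨w₁, w₂, s, t, m, -, -, -, hcomm, -, rfl, rfl⟩
  · simp [mul_assoc]
  · simp [← mul_assoc, hst]
  · simp only [List.prod_append]
    exact congrArg (_ * · * _) hcomm.symm

lemma MOp.sylWord (hSM : StronglyMarked X) (hYX : Y ⊆ X) {w w' : List G}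
    (h : MOp X w w') (hw : SylWord Y w) : SylWord Y w' := by
  rcases h with ⟨w₁, w₂, s, t, -, -, rfl, hcase⟩ | h
  · obtain ⟨⟨hw₁, hs, ht, -⟩, hw₂⟩ := by
      simpa only [sylWord_append, sylWord_cons] using hw
    rcases hcase with ⟨hst, rfl⟩ | ⟨-, rfl⟩
    · obtain ⟨x, hx, a, rfl, hxa⟩ := hs
      obtain ⟨y, hy, b, rfl, hyb⟩ := ht
      obtain rfl : x = y := hSM.2.2 x (hYX hx) y (hYX hy) a b hxa hyb (Or.inl hst)
      obtain ⟨-, -, -, -, hne⟩ := hst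
      have hmerge : x ^ a * x ^ b ∈ Syll Y := ⟨x, hx, a + b, (zpow_add x a b).symm, hne⟩
      simpa only [sylWord_append, sylWord_cons] using ⟨⟨hw₁, hmerge, fun _ h => by simp at h⟩, hw₂⟩
    · exact sylWord_append.2 ⟨hw₁, hw₂⟩
  · exact fun u hu => hw u (h.mem_iff.2 hu)

lemma prod_eq_of_reflTransGen_mOp {w w' : List G} (h : ReflTransGen (MOp X) w w') :
    w'.prod = w.prod := by
  induction h with
  | refl => rfl
  | tail _ hstep ih => exact hstep.prod_eq.trans ih

lemma sylWord_of_reflTransGen_mOp (hSM : StronglyMarked X) (hYX : Y ⊆ X) {w w' : List G}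
    (h : ReflTransGen (MOp X) w w') (hw : SylWord Y w) : SylWord Y w' := by
  induction h with
  | refl => exact hw
  | tail _ hstep ih => exact hstep.sylWord hSM hYX ih

lemma mem_iff_of_reflTransGen_mOpII {w w' : List G} (h : ReflTransGen (MOpII X) w w') {u : G} :
    u ∈ w ↔ u ∈ w' := by
  induction h with
  | refl => rfl
  | tail _ hstep ih => exact ih.trans hstep.mem_iff

lemma exists_reduced_sylWord (hSM : StronglyMarked X) (hPD : PropertyD X) (hYX : Y ⊆ X)
    {w : List G} (hw : SylWord Y w) :
    ∃ w', Reduced X w' ∧ w'.prod = w.prod ∧ SylWord Y w' := by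
  let reachable := {w' | ReflTransGen (MOp X) w w'}
  let w' := Function.argminOn List.length reachable ⟨w, ReflTransGen.refl⟩
  have hreach : ReflTransGen (MOp X) w w' := Function.argminOn_mem _ _ _
  have hw' : SylWord Y w' := sylWord_of_reflTransGen_mOp hSM hYX hreach hw
  have hMReduced : MReduced X w' := fun w'' h =>
    Function.not_lt_argminOn List.length reachable (hreach.trans h)
  exact ⟨w', (hPD.1 w' (sylWord_mono hYX hw')).2 hMReduced,
    prod_eq_of_reflTransGen_mOp hreach, hw'⟩

theorem statement_7 {G : Type*} [Group G] {X : Set G}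
    (hSM : StronglyMarked X) (hPD : PropertyD X)
    (Y : Set G) (hY : Y ⊆ X) (g : G)
    (w : List G) (hw : Reduced X w) (hprod : w.prod = g) :
    g ∈ Subgroup.closure Y ↔ ∀ s ∈ w, ∃ x ∈ Y, ∃ a : ℤ, s = x ^ a := by
  constructor
  · intro hg
    obtain ⟨u, hu, rfl⟩ := exists_sylWord_of_mem_closure hg
    obtain ⟨w', hred', hprod', hw'⟩ := exists_reduced_sylWord hSM hPD hY hu
    have hchain : ReflTransGen (MOpII X) w w' := hPD.2 w w' hw hred' (hprod.trans hprod'.symm)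
    intro s hs
    obtain ⟨x, hx, a, hsa, -⟩ := hw' s ((mem_iff_of_reflTransGen_mOpII hchain).1 hs)
    exact ⟨x, hx, a, hsa⟩
  · intro h
    rw [← hprod]
    refine Subgroup.list_prod_mem _ fun s hs => ?_
    obtain ⟨x, hx, a, rfl⟩ := h s hs
    exact zpow_mem (Subgroup.subset_closure hx) a

end Paper
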